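/- The functors U_i = - ⊗_{Q_m} B_i with B_i = P_i ⊗ _iP⟨-1⟩ on graded projective right Q_m-modules satisfy the categorified Temperley-Lieb relations: U_i ∘ U_i ≅ U_i⟨-1⟩ ⊕ U_i⟨+1⟩, U_i ∘ U_{i±1} ∘ U_i ≅ U_i (when all indices lie in {1,...,m}), and U_i ∘ U_{i'} ≅ 0 when |i - i'| > 1. -/

import Mathlib

/-- Generators of the Khovanov–Seidel quiver with vertices `0, …, m`:
idempotents `e i`, arrows `u i : i → i+1` (for `0 ≤ i ≤ m-1`, encoded by
`i : Fin m`) and arrows `d i` which encode `d_{i+1} : i+1 → i` (for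
`i : Fin m`). -/
inductive KSGen (m : ℕ) : Type
  | e : Fin (m + 1) → KSGen m
  | u : Fin m → KSGen m
  | d : Fin m → KSGen m

namespace KS

variable (K : Type*) [Field K] (m : ℕ)

open FreeAlgebra

/-- The quiver (path-algebra) relations together with the Khovanov–Seidel
relations `u_i u_{i-1} = 0`, `d_i d_{i+1} = 0`, `d_{i+1} u_i = u_{i-1} d_i` and
the dead-end relation `d_1 u_0 = 0`.  Paths compose right-to-left. -/
inductive Rel : FreeAlgebra K (KSGen m) → FreeAlgebra K (KSGen m) → Prop
  | e_mul (i j : Fin (m + 1)) :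
      Rel (ι K (.e i) * ι K (.e j)) (if i = j then ι K (.e i) else 0)
  | one : Rel (∑ i : Fin (m + 1), ι K (KSGen.e i)) 1
  | u_src (i : Fin m) : Rel (ι K (.u i) * ι K (.e i.castSucc)) (ι K (.u i))
  | u_src' (i : Fin m) (j : Fin (m + 1)) (h : j ≠ i.castSucc) :
      Rel (ι K (.u i) * ι K (.e j)) 0
  | u_tgt (i : Fin m) : Rel (ι K (.e i.succ) * ι K (.u i)) (ι K (.u i))
  | u_tgt' (i : Fin m) (j : Fin (m + 1)) (h : j ≠ i.succ) :
      Rel (ι K (.e j) * ι K (.u i)) 0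
  | d_src (i : Fin m) : Rel (ι K (.d i) * ι K (.e i.succ)) (ι K (.d i))
  | d_src' (i : Fin m) (j : Fin (m + 1)) (h : j ≠ i.succ) :
      Rel (ι K (.d i) * ι K (.e j)) 0
  | d_tgt (i : Fin m) : Rel (ι K (.e i.castSucc) * ι K (.d i)) (ι K (.d i))
  | d_tgt' (i : Fin m) (j : Fin (m + 1)) (h : j ≠ i.castSucc) :
      Rel (ι K (.e j) * ι K (.d i)) 0
  | uu (i j : Fin m) (h : (i : ℕ) = (j : ℕ) + 1) :
      Rel (ι K (.u i) * ι K (.u j)) 0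
  | dd (i j : Fin m) (h : (i : ℕ) = (j : ℕ) + 1) :
      Rel (ι K (.d j) * ι K (.d i)) 0
  | du (i j : Fin m) (h : (i : ℕ) = (j : ℕ) + 1) :
      Rel (ι K (.d i) * ι K (.u i)) (ι K (.u j) * ι K (.d j))
  | deadend (i : Fin m) (h : (i : ℕ) = 0) : Rel (ι K (.d i) * ι K (.u i)) 0

/-- The Khovanov–Seidel quiver algebra `Q_m`. -/
abbrev Qm := RingQuot (Rel K m)

/-- The idempotent (length-zero path) at vertex `i`. -/
noncomputable def eQ (i : Fin (m + 1)) : Qm K m :=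
  RingQuot.mkAlgHom K (Rel K m) (ι K (.e i))

/-- The arrow `u_i : i → i+1` (for `i : Fin m`). -/
noncomputable def uQ (i : Fin m) : Qm K m :=
  RingQuot.mkAlgHom K (Rel K m) (ι K (.u i))

/-- The arrow `d_{i+1} : i+1 → i` (for `i : Fin m`). -/
noncomputable def dQ (i : Fin m) : Qm K m :=
  RingQuot.mkAlgHom K (Rel K m) (ι K (.d i))

/-- The loop `ε_{i+1} = u_i d_{i+1}` at the vertex `i+1` (for `i : Fin m`). -/
noncomputable def epsQ (i : Fin m) : Qm K m := uQ K m i * dQ K m i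

/-- An element is an arrow if it is one of the `u_i` or `d_i`. -/
def IsArrow (x : Qm K m) : Prop :=
  (∃ i, x = uQ K m i) ∨ (∃ i, x = dQ K m i)

/-- The degree-`n` component of the path-length grading on `Q_m`: the span of
paths of length `n`, i.e. of products `e_i · a_n ⋯ a_1` of an idempotent with
`n` arrows. -/
noncomputable def grade (n : ℕ) : Submodule K (Qm K m) :=
  Submodule.span K
    {x | ∃ (i : Fin (m + 1)) (L : List (Qm K m)),
      (∀ a ∈ L, IsArrow K m a) ∧ L.length = n ∧ x = eQ K m i * L.prod}

/-- The path-length grading extended to integer degrees (zero in negative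
degrees). -/
noncomputable def gradeZ (n : ℤ) : Submodule K (Qm K m) :=
  if 0 ≤ n then grade K m n.toNat else ⊥

end KS

namespace KS

variable (K : Type*) [Field K] (m : ℕ)

open TensorProduct

/-- The right ideal `ᵢP = e_i Q_m`, as a `K`-subspace. -/
noncomputable def rightIdeal (i : Fin (m + 1)) : Submodule K (Qm K m) :=
  LinearMap.range (LinearMap.mulLeft K (eQ K m i))

/-- The left ideal `P_i = Q_m e_i`, as a `K`-subspace. -/
noncomputable def leftIdeal (i : Fin (m + 1)) : Submodule K (Qm K m) :=
  LinearMap.range (LinearMap.mulRight K (eQ K m i))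

/-- The `K`-subspace `e_{i'} Q_m e_i`. -/
noncomputable def homSpace (i' i : Fin (m + 1)) : Submodule K (Qm K m) :=
  LinearMap.range
    ((LinearMap.mulLeft K (eQ K m i')).comp (LinearMap.mulRight K (eQ K m i)))

/-- Right multiplication by `q` on `e_i Q_m` (the right module structure). -/
noncomputable def rmulRight (i : Fin (m + 1)) (q : Qm K m) :
    rightIdeal K m i →ₗ[K] rightIdeal K m i where
  toFun x := ⟨(x : Qm K m) * q, by
    obtain ⟨x, hx⟩ := x
    obtain ⟨y, rfl⟩ := hx
    exact ⟨y * q, by simp [LinearMap.mulLeft_apply, mul_assoc]⟩⟩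
  map_add' x y := by ext; simp [add_mul]
  map_smul' c x := by ext; simp [smul_mul_assoc]

/-- Left multiplication by `q` on `Q_m e_i` (the left module structure). -/
noncomputable def lmulLeft (i : Fin (m + 1)) (q : Qm K m) :
    leftIdeal K m i →ₗ[K] leftIdeal K m i where
  toFun x := ⟨q * (x : Qm K m), by
    obtain ⟨x, hx⟩ := x
    obtain ⟨y, rfl⟩ := hx
    exact ⟨q * y, by simp [LinearMap.mulRight_apply, mul_assoc]⟩⟩
  map_add' x y := by ext; simp [mul_add]
  map_smul' c x := by ext; simp [mul_smul_comm]

/-- The Khovanov–Seidel bimodule `B_i = P_i ⊗_K ᵢP⟨-1⟩`, as a `K`-space (the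
grading shift is recorded in the degree conditions of the theorem below). -/
noncomputable abbrev Bspace (i : Fin (m + 1)) :=
  (leftIdeal K m i) ⊗[K] (rightIdeal K m i)

/-- The `K`-space `B_i ⊗_{Q_m} B_j ≅ Q_m e_i ⊗_K (e_i Q_m e_j) ⊗_K e_j Q_m`. -/
noncomputable abbrev B2space (i j : Fin (m + 1)) :=
  (leftIdeal K m i) ⊗[K] ((homSpace K m i j) ⊗[K] (rightIdeal K m j))

/-- The `K`-space
`B_i ⊗_{Q_m} B_j ⊗_{Q_m} B_i ≅ Q_m e_i ⊗ (e_i Q_m e_j) ⊗ (e_j Q_m e_i) ⊗ e_i Q_m`. -/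
noncomputable abbrev B3space (i j : Fin (m + 1)) :=
  (leftIdeal K m i) ⊗[K]
    ((homSpace K m i j) ⊗[K] ((homSpace K m j i) ⊗[K] (rightIdeal K m i)))

/-- Left `Q_m`-action on `B_i`. -/
noncomputable def lB (i : Fin (m + 1)) (q : Qm K m) :
    Bspace K m i →ₗ[K] Bspace K m i :=
  LinearMap.rTensor _ (lmulLeft K m i q)

/-- Right `Q_m`-action on `B_i`. -/
noncomputable def rB (i : Fin (m + 1)) (q : Qm K m) :
    Bspace K m i →ₗ[K] Bspace K m i :=
  LinearMap.lTensor _ (rmulRight K m i q)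

/-- Left `Q_m`-action on `B_i ⊗_{Q_m} B_j`. -/
noncomputable def lB2 (i j : Fin (m + 1)) (q : Qm K m) :
    B2space K m i j →ₗ[K] B2space K m i j :=
  LinearMap.rTensor _ (lmulLeft K m i q)

/-- Right `Q_m`-action on `B_i ⊗_{Q_m} B_j`. -/
noncomputable def rB2 (i j : Fin (m + 1)) (q : Qm K m) :
    B2space K m i j →ₗ[K] B2space K m i j :=
  LinearMap.lTensor _ (LinearMap.lTensor _ (rmulRight K m j q))

/-- Left `Q_m`-action on `B_i ⊗_{Q_m} B_j ⊗_{Q_m} B_i`. -/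
noncomputable def lB3 (i j : Fin (m + 1)) (q : Qm K m) :
    B3space K m i j →ₗ[K] B3space K m i j :=
  LinearMap.rTensor _ (lmulLeft K m i q)

/-- Right `Q_m`-action on `B_i ⊗_{Q_m} B_j ⊗_{Q_m} B_i`. -/
noncomputable def rB3 (i j : Fin (m + 1)) (q : Qm K m) :
    B3space K m i j →ₗ[K] B3space K m i j :=
  LinearMap.lTensor _ (LinearMap.lTensor _ (LinearMap.lTensor _ (rmulRight K m i q)))

/-- The degree-`n` part of the (underlying, unshifted) path-length grading of
`B_i`: the span of `p ⊗ x` with `p, x` homogeneous of total degree `n`. -/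
noncomputable def Bgrade (i : Fin (m + 1)) (n : ℤ) : Submodule K (Bspace K m i) :=
  Submodule.span K
    {z | ∃ (a b : ℕ) (p : leftIdeal K m i) (x : rightIdeal K m i),
      (p : Qm K m) ∈ grade K m a ∧ (x : Qm K m) ∈ grade K m b ∧
      (a : ℤ) + b = n ∧ z = p ⊗ₜ[K] x}

end KS

/-!
`B_i ⊗_{Q_m} B_j ≅ Q_m e_i ⊗ e_i Q_m e_j ⊗ e_j Q_m`, so all three relations come down to the
hom spaces `e_i Q_m e_j`. The paths `e_i, u_i, d_i, ε_i` span `Q_m` (left multiplication by a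
generator sends a path to a path or to zero), and the coefficient of each path, read off from
the left regular representation written in path coordinates, is a well-defined functional
that vanishes on the other homogeneous components. Hence, for `i ≥ 1`, `e_i Q_m e_i` has basis
`e_i, ε_i` in degrees `0, 2`; `e_i Q_m e_{i±1}` is spanned by one arrow; and
`e_i Q_m e_{i'} = 0` for `|i - i'| > 1`. Tensoring over these spaces splits the middle factor
into two shifted copies, contracts it, or kills it.
-/

namespace KS

section Relations

variable {K : Type*} [Field K] {m : ℕ}

lemma eQ_mul_eQ (i j : Fin (m + 1)) :
    eQ K m i * eQ K m j = if i = j then eQ K m i else 0 := by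
  simpa [eQ, apply_ite (RingQuot.mkAlgHom K (Rel K m))] using
    RingQuot.mkAlgHom_rel K (Rel.e_mul (K := K) (m := m) i j)

lemma sum_eQ : ∑ i : Fin (m + 1), eQ K m i = 1 := by
  simpa [eQ] using RingQuot.mkAlgHom_rel K (Rel.one (K := K) (m := m))

lemma uQ_mul_eQ (i : Fin m) (j : Fin (m + 1)) :
    uQ K m i * eQ K m j = if j = i.castSucc then uQ K m i else 0 := by
  rcases eq_or_ne j i.castSucc with rfl | h
  · simpa [uQ, eQ] using RingQuot.mkAlgHom_rel K (Rel.u_src (K := K) (m := m) i)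
  · simpa [uQ, eQ, h] using RingQuot.mkAlgHom_rel K (Rel.u_src' (K := K) (m := m) i j h)

lemma eQ_mul_uQ (j : Fin (m + 1)) (i : Fin m) :
    eQ K m j * uQ K m i = if j = i.succ then uQ K m i else 0 := by
  rcases eq_or_ne j i.succ with rfl | h
  · simpa [uQ, eQ] using RingQuot.mkAlgHom_rel K (Rel.u_tgt (K := K) (m := m) i)
  · simpa [uQ, eQ, h] using RingQuot.mkAlgHom_rel K (Rel.u_tgt' (K := K) (m := m) i j h)

lemma dQ_mul_eQ (i : Fin m) (j : Fin (m + 1)) :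
    dQ K m i * eQ K m j = if j = i.succ then dQ K m i else 0 := by
  rcases eq_or_ne j i.succ with rfl | h
  · simpa [dQ, eQ] using RingQuot.mkAlgHom_rel K (Rel.d_src (K := K) (m := m) i)
  · simpa [dQ, eQ, h] using RingQuot.mkAlgHom_rel K (Rel.d_src' (K := K) (m := m) i j h)

lemma eQ_mul_dQ (j : Fin (m + 1)) (i : Fin m) :
    eQ K m j * dQ K m i = if j = i.castSucc then dQ K m i else 0 := by
  rcases eq_or_ne j i.castSucc with rfl | h
  · simpa [dQ, eQ] using RingQuot.mkAlgHom_rel K (Rel.d_tgt (K := K) (m := m) i)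
  · simpa [dQ, eQ, h] using RingQuot.mkAlgHom_rel K (Rel.d_tgt' (K := K) (m := m) i j h)

lemma epsQ_mul_eQ (i : Fin m) (j : Fin (m + 1)) :
    epsQ K m i * eQ K m j = if j = i.succ then epsQ K m i else 0 := by
  rw [epsQ, mul_assoc, dQ_mul_eQ]
  split_ifs <;> simp

lemma eQ_mul_epsQ (j : Fin (m + 1)) (i : Fin m) :
    eQ K m j * epsQ K m i = if j = i.succ then epsQ K m i else 0 := by
  rw [epsQ, ← mul_assoc, eQ_mul_uQ]
  split_ifs <;> simp

/-- `x` starts at `j` and `y` ends at `j' ≠ j`, so they do not compose. -/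
lemma mul_eq_zero_of_ne {x y : Qm K m} (j j' : Fin (m + 1)) (hx : x * eQ K m j = x)
    (hy : eQ K m j' * y = y) (h : j ≠ j') : x * y = 0 := by
  rw [← hx, ← hy, mul_assoc, ← mul_assoc (eQ K m j), eQ_mul_eQ, if_neg h]
  simp

lemma uQ_mul_uQ (i j : Fin m) : uQ K m i * uQ K m j = 0 := by
  rcases eq_or_ne (i : ℕ) ((j : ℕ) + 1) with h | h
  · simpa [uQ] using RingQuot.mkAlgHom_rel K (Rel.uu (K := K) (m := m) i j h)
  · exact mul_eq_zero_of_ne i.castSucc j.succ (by simp [uQ_mul_eQ])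
      (by simp [eQ_mul_uQ]) (by simpa [Fin.ext_iff] using h)

lemma dQ_mul_dQ (i j : Fin m) : dQ K m i * dQ K m j = 0 := by
  rcases eq_or_ne (j : ℕ) ((i : ℕ) + 1) with h | h
  · simpa [dQ] using RingQuot.mkAlgHom_rel K (Rel.dd (K := K) (m := m) j i h)
  · exact mul_eq_zero_of_ne i.succ j.castSucc (by simp [dQ_mul_eQ])
      (by simp [eQ_mul_dQ]) (by simpa [Fin.ext_iff] using fun h' => h h'.symm)

lemma uQ_mul_dQ (i j : Fin m) :
    uQ K m i * dQ K m j = if j = i then epsQ K m i else 0 := by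
  rcases eq_or_ne j i with rfl | h
  · simp [epsQ]
  · rw [if_neg h]
    exact mul_eq_zero_of_ne i.castSucc j.castSucc (by simp [uQ_mul_eQ])
      (by simp [eQ_mul_dQ]) (by simpa using Ne.symm h)

lemma dQ_mul_uQ_of_ne {i j : Fin m} (h : i ≠ j) : dQ K m i * uQ K m j = 0 :=
  mul_eq_zero_of_ne i.succ j.succ (by simp [dQ_mul_eQ]) (by simp [eQ_mul_uQ])
    (by simpa using h)

lemma dQ_mul_uQ_of_val_eq_succ {i j : Fin m} (h : (i : ℕ) = (j : ℕ) + 1) :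
    dQ K m i * uQ K m i = epsQ K m j := by
  simpa [dQ, uQ, epsQ] using RingQuot.mkAlgHom_rel K (Rel.du (K := K) (m := m) i j h)

lemma dQ_mul_uQ_of_val_eq_zero {i : Fin m} (h : (i : ℕ) = 0) : dQ K m i * uQ K m i = 0 := by
  simpa [dQ, uQ] using RingQuot.mkAlgHom_rel K (Rel.deadend (K := K) (m := m) i h)

lemma uQ_mul_epsQ (j i : Fin m) : uQ K m j * epsQ K m i = 0 := by
  rw [epsQ, ← mul_assoc, uQ_mul_uQ, zero_mul]

lemma dQ_mul_epsQ (j i : Fin m) : dQ K m j * epsQ K m i = 0 := by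
  rcases eq_or_ne j i with rfl | h
  · rcases Nat.eq_zero_or_pos (j : ℕ) with h0 | h0
    · rw [epsQ, ← mul_assoc, dQ_mul_uQ_of_val_eq_zero h0, zero_mul]
    · rw [epsQ, ← mul_assoc,
        dQ_mul_uQ_of_val_eq_succ (j := ⟨(j : ℕ) - 1, by omega⟩) (by simp; omega), epsQ,
        mul_assoc, dQ_mul_dQ, mul_zero]
  · rw [epsQ, ← mul_assoc, dQ_mul_uQ_of_ne h, zero_mul]

end Relations

/-- The paths of `Q_m`, which form its canonical basis; `eps i` is the loop `u_i d_{i+1}`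
at the vertex `i + 1`. -/
inductive Path (m : ℕ) : Type
  | e : Fin (m + 1) → Path m
  | u : Fin m → Path m
  | d : Fin m → Path m
  | eps : Fin m → Path m
  deriving DecidableEq

namespace Path

variable {m : ℕ}

def length : Path m → ℕ
  | .e _ => 0
  | .u _ => 1
  | .d _ => 1
  | .eps _ => 2

def src : Path m → Fin (m + 1)
  | .e i => i
  | .u i => i.castSucc
  | .d i => i.succ
  | .eps i => i.succ

def tgt : Path m → Fin (m + 1)
  | .e i => i
  | .u i => i.succ
  | .d i => i.castSucc
  | .eps i => i.succ

noncomputable def toQm (K : Type*) [Field K] : Path m → Qm K m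
  | .e i => eQ K m i
  | .u i => uQ K m i
  | .d i => dQ K m i
  | .eps i => epsQ K m i

/-- `stripLeft g b = some b'` exactly when `g * b' = b`. -/
def stripLeft : KSGen m → Path m → Option (Path m)
  | .e i, .e j => if j = i then some (.e j) else none
  | .e i, .u j => if j.succ = i then some (.u j) else none
  | .e i, .d j => if j.castSucc = i then some (.d j) else none
  | .e i, .eps j => if j.succ = i then some (.eps j) else none
  | .u i, .u j => if j = i then some (.e i.castSucc) else none
  | .u i, .eps j => if j = i then some (.d i) else none
  | .u _, _ => none
  | .d i, .d j => if j = i then some (.e i.succ) else none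
  | .d i, .eps j => if (i : ℕ) = (j : ℕ) + 1 then some (.u i) else none
  | .d _, _ => none

lemma length_eq_of_stripLeft_eq_some {g : KSGen m} (hg : ∀ i, g ≠ .e i) {b b' : Path m}
    (h : stripLeft g b = some b') : b.length = b'.length + 1 := by
  cases g with
  | e i => exact absurd rfl (hg i)
  | _ => cases b <;> simp [stripLeft] at h <;> obtain ⟨-, rfl⟩ := h <;> rfl

lemma eq_of_stripLeft_e_eq_some {i : Fin (m + 1)} {b b' : Path m}
    (h : stripLeft (.e i) b = some b') : b' = b := by
  cases b <;> simp [stripLeft] at h <;> exact h.2.symm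

variable {K : Type*} [Field K]

lemma eQ_mul_toQm (i : Fin (m + 1)) (b : Path m) :
    eQ K m i * b.toQm K = if b.tgt = i then b.toQm K else 0 := by
  cases b <;> simp only [toQm, tgt, eQ_mul_eQ, eQ_mul_uQ, eQ_mul_dQ, eQ_mul_epsQ] <;>
    split_ifs <;> simp_all

lemma toQm_mul_eQ (b : Path m) (i : Fin (m + 1)) :
    b.toQm K * eQ K m i = if b.src = i then b.toQm K else 0 := by
  cases b <;> simp only [toQm, src, eQ_mul_eQ, uQ_mul_eQ, dQ_mul_eQ, epsQ_mul_eQ] <;>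
    split_ifs <;> simp_all

lemma toQm_mem_homSpace (b : Path m) : b.toQm K ∈ homSpace K m b.tgt b.src :=
  ⟨b.toQm K, by simp [toQm_mul_eQ, eQ_mul_toQm]⟩

variable (K) in
/-- Left multiplication by a generator, in coordinates with respect to the path basis. -/
def genAction (g : KSGen m) : Module.End K (Path m → K) where
  toFun f b := (stripLeft g b).elim 0 f
  map_add' f₁ f₂ := by funext b; cases h : stripLeft g b <;> simp [h]
  map_smul' c f := by funext b; cases h : stripLeft g b <;> simp [h]

lemma genAction_apply (g : KSGen m) (f : Path m → K) (b : Path m) :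
    genAction K g f b = (stripLeft g b).elim 0 f := rfl

end Path

section Spanning

variable {K : Type*} [Field K] {m : ℕ}

lemma mul_toQm_eq_zero_or (g : KSGen m) (b : Path m) :
    RingQuot.mkAlgHom K (Rel K m) (FreeAlgebra.ι K g) * b.toQm K = 0 ∨
      ∃ b' : Path m, RingQuot.mkAlgHom K (Rel K m) (FreeAlgebra.ι K g) * b.toQm K = b'.toQm K := by
  cases g with
  | e i =>
    show eQ K m i * _ = 0 ∨ ∃ b' : Path m, eQ K m i * _ = _
    rw [Path.eQ_mul_toQm]
    split_ifs
    exacts [Or.inr ⟨b, rfl⟩, Or.inl rfl]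
  | u i =>
    show uQ K m i * _ = 0 ∨ ∃ b' : Path m, uQ K m i * _ = _
    cases b with
    | e j => rw [Path.toQm, uQ_mul_eQ]; split_ifs; exacts [Or.inr ⟨.u i, rfl⟩, Or.inl rfl]
    | u j => exact Or.inl (uQ_mul_uQ i j)
    | d j => rw [Path.toQm, uQ_mul_dQ]; split_ifs; exacts [Or.inr ⟨.eps i, rfl⟩, Or.inl rfl]
    | eps j => exact Or.inl (uQ_mul_epsQ i j)
  | d i =>
    show dQ K m i * _ = 0 ∨ ∃ b' : Path m, dQ K m i * _ = _
    cases b with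
    | e j => rw [Path.toQm, dQ_mul_eQ]; split_ifs; exacts [Or.inr ⟨.d i, rfl⟩, Or.inl rfl]
    | u j =>
      rcases eq_or_ne i j with rfl | h
      · rcases Nat.eq_zero_or_pos (i : ℕ) with h0 | h0
        · exact Or.inl (dQ_mul_uQ_of_val_eq_zero h0)
        · exact Or.inr ⟨.eps ⟨(i : ℕ) - 1, by omega⟩,
            dQ_mul_uQ_of_val_eq_succ (by simp; omega)⟩
      · exact Or.inl (dQ_mul_uQ_of_ne h)
    | d j => exact Or.inl (dQ_mul_dQ i j)
    | eps j => exact Or.inl (dQ_mul_epsQ i j)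

lemma span_toQm_eq_top : Submodule.span K (Set.range (Path.toQm K (m := m))) = ⊤ := by
  set W := Submodule.span K (Set.range (Path.toQm K (m := m)))
  have hmul : ∀ (x : FreeAlgebra K (KSGen m)) (w : Qm K m), w ∈ W →
      RingQuot.mkAlgHom K (Rel K m) x * w ∈ W := by
    intro x
    induction x using FreeAlgebra.induction with
    | grade0 r => intro w hw; simpa [Algebra.smul_def] using W.smul_mem r hw
    | grade1 g =>
      intro w hw
      induction hw using Submodule.span_induction with
      | mem w hw =>
        obtain ⟨b, rfl⟩ := hw
        rcases mul_toQm_eq_zero_or (K := K) g b with h | ⟨b', h⟩ <;> rw [h]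
        exacts [W.zero_mem, Submodule.subset_span ⟨b', rfl⟩]
      | zero => simp
      | add x y _ _ hx hy => rw [mul_add]; exact W.add_mem hx hy
      | smul c x _ hx => rw [mul_smul_comm]; exact W.smul_mem c hx
    | mul x y hx hy => intro w hw; rw [map_mul, mul_assoc]; exact hx _ (hy w hw)
    | add x y hx hy => intro w hw; rw [map_add, add_mul]; exact W.add_mem (hx w hw) (hy w hw)
  have hone : (1 : Qm K m) ∈ W := by
    rw [← sum_eQ]
    exact Submodule.sum_mem _ fun i _ => Submodule.subset_span ⟨.e i, rfl⟩
  refine eq_top_iff.2 fun q _ => ?_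
  obtain ⟨x, rfl⟩ := RingQuot.mkAlgHom_surjective K (Rel K m) q
  simpa using hmul x 1 hone

lemma homSpace_le_span (i' i : Fin (m + 1)) (S : Set (Path m))
    (hS : ∀ b : Path m, b.tgt = i' → b.src = i → b ∈ S) :
    homSpace K m i' i ≤ Submodule.span K (Path.toQm K '' S) := by
  rintro _ ⟨q, rfl⟩
  have hq : q ∈ Submodule.span K (Set.range (Path.toQm K (m := m))) := by
    simp [span_toQm_eq_top]
  simp only [LinearMap.coe_comp, Function.comp_apply, LinearMap.mulRight_apply,
    LinearMap.mulLeft_apply]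
  induction hq using Submodule.span_induction with
  | mem x hx =>
    obtain ⟨b, rfl⟩ := hx
    rw [Path.toQm_mul_eQ]
    split_ifs with hsrc
    · rw [Path.eQ_mul_toQm]
      split_ifs with htgt
      · exact Submodule.subset_span ⟨b, hS b htgt hsrc, rfl⟩
      · exact Submodule.zero_mem _
    · simp
  | zero => simp
  | add x y _ _ hx hy => rw [add_mul, mul_add]; exact Submodule.add_mem _ hx hy
  | smul c x _ hx => rw [smul_mul_assoc, mul_smul_comm]; exact Submodule.smul_mem _ c hx

lemma homSpace_succ_succ_le (k : Fin m) :
    homSpace K m k.succ k.succ ≤ Submodule.span K {eQ K m k.succ, epsQ K m k} := by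
  have hle := homSpace_le_span (K := K) k.succ k.succ {.e k.succ, .eps k} fun b => by
    cases b <;> simp [Path.src, Path.tgt, Fin.ext_iff] <;> omega
  simpa [Set.image_pair, Path.toQm] using hle

lemma homSpace_succ_castSucc_le (k : Fin m) :
    homSpace K m k.succ k.castSucc ≤ Submodule.span K {uQ K m k} := by
  have hle := homSpace_le_span (K := K) k.succ k.castSucc {.u k} fun b => by
    cases b <;> simp [Path.src, Path.tgt, Fin.ext_iff] <;> omega
  simpa [Path.toQm] using hle

lemma homSpace_castSucc_succ_le (k : Fin m) :
    homSpace K m k.castSucc k.succ ≤ Submodule.span K {dQ K m k} := by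
  have hle := homSpace_le_span (K := K) k.castSucc k.succ {.d k} fun b => by
    cases b <;> simp [Path.src, Path.tgt, Fin.ext_iff] <;> omega
  simpa [Path.toQm] using hle

lemma homSpace_eq_bot {i' i : Fin (m + 1)} (h : 1 < ((i : ℤ) - (i' : ℤ)).natAbs) :
    homSpace K m i' i = ⊥ := by
  have hle := homSpace_le_span (K := K) i' i ∅ fun b => by
    cases b <;> simp [Path.src, Path.tgt, Fin.ext_iff] at h ⊢ <;> omega
  simpa using hle

end Spanning

section Coefficients

lemma option_elim_ite {α β : Type*} (c : Prop) [Decidable c] (a : α) (z : β) (f : α → β) :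
    (if c then some a else none).elim z f = if c then f a else z := by
  split_ifs <;> rfl

variable (K : Type*) [Field K] (m : ℕ)

lemma lift_genAction_eq_of_rel : ∀ ⦃x y⦄, Rel K m x y →
    FreeAlgebra.lift K (Path.genAction K) x = FreeAlgebra.lift K (Path.genAction K (m := m)) y := by
  intro x y h
  induction h with
  | one =>
    ext f b
    cases b <;> simp [Path.genAction_apply, Path.stripLeft, Finset.sum_apply, option_elim_ite]
  | e_mul i j =>
    ext f b
    split_ifs with hij <;> cases b <;>
      simp_all [Path.genAction_apply, Path.stripLeft, Fin.ext_iff, option_elim_ite]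
  | _ =>
    ext f b
    cases b <;> simp_all [Path.genAction_apply, Path.stripLeft, Fin.ext_iff, option_elim_ite] <;>
      first
        | (intros; omega)
        | (split_ifs <;> first | rfl | omega | (congr 2; ext; simp; omega))

/-- The left regular representation of `Q_m` in path coordinates. -/
noncomputable def pathRep : Qm K m →ₐ[K] Module.End K (Path m → K) :=
  RingQuot.liftAlgHom K ⟨FreeAlgebra.lift K (Path.genAction K), lift_genAction_eq_of_rel K m⟩

/-- The coefficient of `b` in `q`: `pathRep q` applied to the coordinate vector of
`1 = ∑ e_i`. -/
noncomputable def pathCoeff (b : Path m) : Qm K m →ₗ[K] K where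
  toFun q := pathRep K m q (fun b' => if b'.length = 0 then 1 else 0) b
  map_add' x y := by simp
  map_smul' c x := by simp

def IsHomogeneous (k : ℕ) (f : Path m → K) : Prop :=
  ∀ b : Path m, b.length ≠ k → f b = 0

variable {K m}

lemma pathRep_eQ (i : Fin (m + 1)) : pathRep K m (eQ K m i) = Path.genAction K (.e i) := by
  simp [pathRep, eQ]

lemma pathRep_uQ (i : Fin m) : pathRep K m (uQ K m i) = Path.genAction K (.u i) := by
  simp [pathRep, uQ]

lemma pathRep_dQ (i : Fin m) : pathRep K m (dQ K m i) = Path.genAction K (.d i) := by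
  simp [pathRep, dQ]

lemma pathCoeff_toQm (b b' : Path m) :
    pathCoeff K m b (b'.toQm K) = if b = b' then 1 else 0 := by
  cases b' <;> cases b <;>
    simp [pathCoeff, Path.toQm, epsQ, pathRep_eQ, pathRep_uQ, pathRep_dQ, Path.genAction_apply,
      Path.stripLeft, Path.length, option_elim_ite]

lemma IsHomogeneous.genAction {g : KSGen m} (hg : ∀ i, g ≠ .e i) {k : ℕ} {f : Path m → K}
    (hf : IsHomogeneous K m k f) : IsHomogeneous K m (k + 1) (Path.genAction K g f) := by
  intro b hb
  rw [Path.genAction_apply]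
  cases h : Path.stripLeft g b with
  | none => rfl
  | some b' => exact hf b' (by have := Path.length_eq_of_stripLeft_eq_some hg h; omega)

lemma IsHomogeneous.pathRep_eQ {k : ℕ} {f : Path m → K} (hf : IsHomogeneous K m k f)
    (i : Fin (m + 1)) : IsHomogeneous K m k (pathRep K m (eQ K m i) f) := by
  intro b hb
  rw [KS.pathRep_eQ, Path.genAction_apply]
  cases h : Path.stripLeft (.e i) b with
  | none => rfl
  | some b' => rw [Path.eq_of_stripLeft_e_eq_some h]; exact hf b hb

lemma IsHomogeneous.pathRep_of_isArrow {k : ℕ} {f : Path m → K} (hf : IsHomogeneous K m k f)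
    {a : Qm K m} (ha : IsArrow K m a) : IsHomogeneous K m (k + 1) (pathRep K m a f) := by
  rcases ha with ⟨i, rfl⟩ | ⟨i, rfl⟩
  · rw [pathRep_uQ]; exact hf.genAction (by simp)
  · rw [pathRep_dQ]; exact hf.genAction (by simp)

lemma IsHomogeneous.pathRep_prod {k : ℕ} {f : Path m → K} (hf : IsHomogeneous K m k f)
    (L : List (Qm K m)) (hL : ∀ a ∈ L, IsArrow K m a) :
    IsHomogeneous K m (k + L.length) (pathRep K m L.prod f) := by
  induction L with
  | nil => simpa using hf
  | cons a L ih =>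
    rw [List.prod_cons, map_mul, Module.End.mul_apply, List.length_cons, ← add_assoc]
    exact (ih fun x hx => hL x (List.mem_cons_of_mem a hx)).pathRep_of_isArrow
      (hL a List.mem_cons_self)

lemma IsHomogeneous.pathRep_of_mem_grade {k n : ℕ} {f : Path m → K}
    (hf : IsHomogeneous K m k f) {q : Qm K m} (hq : q ∈ grade K m n) :
    IsHomogeneous K m (k + n) (pathRep K m q f) := by
  induction hq using Submodule.span_induction with
  | mem x hx =>
    obtain ⟨i, L, hL, rfl, rfl⟩ := hx
    rw [map_mul, Module.End.mul_apply]
    exact (hf.pathRep_prod L hL).pathRep_eQ i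
  | zero => intro b _; simp
  | add x y _ _ hx hy => intro b hb; simp [hx b hb, hy b hb]
  | smul c x _ hx => intro b hb; simp [hx b hb]

lemma pathCoeff_eq_zero_of_mem_grade {n : ℕ} {q : Qm K m} (hq : q ∈ grade K m n)
    {b : Path m} (hb : b.length ≠ n) : pathCoeff K m b q = 0 := by
  have h1 : IsHomogeneous K m 0 fun b' : Path m => if b'.length = 0 then (1 : K) else 0 := by
    intro b' hb'
    simp [hb']
  exact h1.pathRep_of_mem_grade hq b (by omega)

end Coefficients

section DualPairs

variable {K V : Type*} [CommSemiring K] [AddCommMonoid V] [Module K V]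

noncomputable def equivOfLeSpanSingleton (N : Submodule K V) {g : V} (hg : g ∈ N)
    (c : V →ₗ[K] K) (hN : N ≤ Submodule.span K {g}) (hc : c g = 1) : N ≃ₗ[K] K where
  toFun h := c h
  map_add' x y := by simp
  map_smul' r x := by simp
  invFun a := ⟨a • g, N.smul_mem a hg⟩
  left_inv h := by
    obtain ⟨a, ha⟩ := Submodule.mem_span_singleton.1 (hN h.2)
    ext
    simp [← ha, hc]
  right_inv a := by simp [hc]

noncomputable def equivOfLeSpanPair (N : Submodule K V) {g₀ g₁ : V} (hg₀ : g₀ ∈ N)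
    (hg₁ : g₁ ∈ N) (c₀ c₁ : V →ₗ[K] K) (hN : N ≤ Submodule.span K {g₀, g₁})
    (h₀₀ : c₀ g₀ = 1) (h₀₁ : c₀ g₁ = 0) (h₁₀ : c₁ g₀ = 0) (h₁₁ : c₁ g₁ = 1) :
    N ≃ₗ[K] K × K where
  toFun h := (c₀ h, c₁ h)
  map_add' x y := by simp
  map_smul' r x := by simp
  invFun p := ⟨p.1 • g₀ + p.2 • g₁, N.add_mem (N.smul_mem _ hg₀) (N.smul_mem _ hg₁)⟩
  left_inv h := by
    obtain ⟨a, b, hab⟩ := Submodule.mem_span_pair.1 (hN h.2)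
    ext
    simp [← hab, h₀₀, h₀₁, h₁₀, h₁₁]
  right_inv p := by simp [h₀₀, h₀₁, h₁₀, h₁₁]

end DualPairs

section TensorContraction

open TensorProduct

variable {K P N N₁ N₂ X : Type*} [CommSemiring K]
  [AddCommMonoid P] [AddCommMonoid N] [AddCommMonoid N₁] [AddCommMonoid N₂] [AddCommMonoid X]
  [Module K P] [Module K N] [Module K N₁] [Module K N₂] [Module K X]

noncomputable def splitMiddle (φ : N ≃ₗ[K] K × K) :
    P ⊗[K] (N ⊗[K] X) ≃ₗ[K] (P ⊗[K] X) × (P ⊗[K] X) :=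
  (LinearEquiv.lTensor P ((LinearEquiv.rTensor X φ).trans
    ((TensorProduct.prodLeft K K K K X).trans
      (LinearEquiv.prodCongr (TensorProduct.lid K X) (TensorProduct.lid K X))))).trans
    (TensorProduct.prodRight K K P X X)

@[simp] lemma splitMiddle_tmul (φ : N ≃ₗ[K] K × K) (p : P) (h : N) (x : X) :
    splitMiddle φ (p ⊗ₜ (h ⊗ₜ x)) = ((φ h).1 • (p ⊗ₜ x), (φ h).2 • (p ⊗ₜ x)) := by
  obtain ⟨a, b, hab⟩ : ∃ a b, φ h = (a, b) := ⟨_, _, rfl⟩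
  simp [splitMiddle, hab, tmul_smul]

noncomputable def contractMiddle₂ (φ₁ : N₁ ≃ₗ[K] K) (φ₂ : N₂ ≃ₗ[K] K) :
    P ⊗[K] (N₁ ⊗[K] (N₂ ⊗[K] X)) ≃ₗ[K] P ⊗[K] X :=
  LinearEquiv.lTensor P
    ((LinearEquiv.lTensor N₁ ((LinearEquiv.rTensor X φ₂).trans (TensorProduct.lid K X))).trans
      ((LinearEquiv.rTensor X φ₁).trans (TensorProduct.lid K X)))

@[simp] lemma contractMiddle₂_tmul (φ₁ : N₁ ≃ₗ[K] K) (φ₂ : N₂ ≃ₗ[K] K) (p : P) (h₁ : N₁)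
    (h₂ : N₂) (x : X) :
    contractMiddle₂ φ₁ φ₂ (p ⊗ₜ (h₁ ⊗ₜ (h₂ ⊗ₜ x))) = (φ₁ h₁ * φ₂ h₂) • (p ⊗ₜ x) := by
  simp [contractMiddle₂, tmul_smul, smul_smul, mul_comm]

lemma splitMiddle_rTensor (φ : N ≃ₗ[K] K × K) (f : P →ₗ[K] P) (z : P ⊗[K] (N ⊗[K] X)) :
    splitMiddle φ (f.rTensor _ z) =
      LinearMap.prodMap (f.rTensor X) (f.rTensor X) (splitMiddle φ z) := by
  have : (splitMiddle φ).toLinearMap ∘ₗ f.rTensor _ =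
      LinearMap.prodMap (f.rTensor X) (f.rTensor X) ∘ₗ (splitMiddle φ).toLinearMap :=
    TensorProduct.ext_threefold' fun p h x => by simp
  exact LinearMap.congr_fun this z

lemma splitMiddle_lTensor (φ : N ≃ₗ[K] K × K) (g : X →ₗ[K] X) (z : P ⊗[K] (N ⊗[K] X)) :
    splitMiddle φ ((g.lTensor N).lTensor P z) =
      LinearMap.prodMap (g.lTensor P) (g.lTensor P) (splitMiddle φ z) := by
  have : (splitMiddle φ).toLinearMap ∘ₗ (g.lTensor N).lTensor P =
      LinearMap.prodMap (g.lTensor P) (g.lTensor P) ∘ₗ (splitMiddle φ).toLinearMap :=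
    TensorProduct.ext_threefold' fun p h x => by simp
  exact LinearMap.congr_fun this z

lemma contractMiddle₂_rTensor (φ₁ : N₁ ≃ₗ[K] K) (φ₂ : N₂ ≃ₗ[K] K) (f : P →ₗ[K] P)
    (z : P ⊗[K] (N₁ ⊗[K] (N₂ ⊗[K] X))) :
    contractMiddle₂ φ₁ φ₂ (f.rTensor _ z) = f.rTensor X (contractMiddle₂ φ₁ φ₂ z) := by
  have : (contractMiddle₂ φ₁ φ₂).toLinearMap ∘ₗ f.rTensor _ =
      f.rTensor X ∘ₗ (contractMiddle₂ (P := P) (X := X) φ₁ φ₂).toLinearMap := by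
    ext p h₁ h₂ x
    simp
  exact LinearMap.congr_fun this z

lemma contractMiddle₂_lTensor (φ₁ : N₁ ≃ₗ[K] K) (φ₂ : N₂ ≃ₗ[K] K) (g : X →ₗ[K] X)
    (z : P ⊗[K] (N₁ ⊗[K] (N₂ ⊗[K] X))) :
    contractMiddle₂ φ₁ φ₂ (((g.lTensor N₂).lTensor N₁).lTensor P z) =
      g.lTensor P (contractMiddle₂ φ₁ φ₂ z) := by
  have : (contractMiddle₂ φ₁ φ₂).toLinearMap ∘ₗ ((g.lTensor N₂).lTensor N₁).lTensor P =
      g.lTensor P ∘ₗ (contractMiddle₂ (P := P) (X := X) φ₁ φ₂).toLinearMap := by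
    ext p h₁ h₂ x
    simp
  exact LinearMap.congr_fun this z

end TensorContraction

section HomSpaceEquivs

variable {K : Type*} [Field K] {m : ℕ}

/-- `e_{k+1} Q_m e_{k+1}` has basis `e_{k+1}, ε_{k+1}`, of degrees `0` and `2`. -/
noncomputable def homSpaceSuccEquiv (k : Fin m) : homSpace K m k.succ k.succ ≃ₗ[K] K × K :=
  equivOfLeSpanPair _ ((Path.e k.succ).toQm_mem_homSpace) ((Path.eps k).toQm_mem_homSpace)
    (pathCoeff K m (.e k.succ)) (pathCoeff K m (.eps k)) (homSpace_succ_succ_le k)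
    (by simp [pathCoeff_toQm]) (by simp [pathCoeff_toQm]) (by simp [pathCoeff_toQm])
    (by simp [pathCoeff_toQm])

lemma homSpaceSuccEquiv_fst_eq_zero {k : Fin m} {n : ℕ} {h : homSpace K m k.succ k.succ}
    (hh : (h : Qm K m) ∈ grade K m n) (hn : n ≠ 0) : (homSpaceSuccEquiv k h).1 = 0 :=
  pathCoeff_eq_zero_of_mem_grade hh (Ne.symm hn)

lemma homSpaceSuccEquiv_snd_eq_zero {k : Fin m} {n : ℕ} {h : homSpace K m k.succ k.succ}
    (hh : (h : Qm K m) ∈ grade K m n) (hn : n ≠ 2) : (homSpaceSuccEquiv k h).2 = 0 :=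
  pathCoeff_eq_zero_of_mem_grade hh (Ne.symm hn)

noncomputable def homSpaceEquivOfLeSpan (b : Path m)
    (hle : homSpace K m b.tgt b.src ≤ Submodule.span K {b.toQm K}) :
    homSpace K m b.tgt b.src ≃ₗ[K] K :=
  equivOfLeSpanSingleton _ b.toQm_mem_homSpace (pathCoeff K m b) hle (by simp [pathCoeff_toQm])

lemma homSpaceEquivOfLeSpan_eq_zero (b : Path m)
    (hle : homSpace K m b.tgt b.src ≤ Submodule.span K {b.toQm K}) {n : ℕ}
    {h : homSpace K m b.tgt b.src} (hh : (h : Qm K m) ∈ grade K m n) (hn : n ≠ b.length) :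
    homSpaceEquivOfLeSpan b hle h = 0 :=
  pathCoeff_eq_zero_of_mem_grade hh (Ne.symm hn)

end HomSpaceEquivs

section TemperleyLieb

open TensorProduct

variable {K : Type*} [Field K] {m : ℕ}

lemma tmul_mem_Bgrade {i : Fin (m + 1)} {a b : ℕ} {p : leftIdeal K m i} {x : rightIdeal K m i}
    (hp : (p : Qm K m) ∈ grade K m a) (hx : (x : Qm K m) ∈ grade K m b) :
    p ⊗ₜ[K] x ∈ Bgrade K m i (a + b) :=
  Submodule.subset_span ⟨a, b, p, x, hp, hx, rfl, rfl⟩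

lemma exists_B2space_equiv {i : Fin (m + 1)} (φ : homSpace K m i i ≃ₗ[K] K × K)
    (hφ₁ : ∀ n (h : homSpace K m i i), (h : Qm K m) ∈ grade K m n → n ≠ 0 → (φ h).1 = 0)
    (hφ₂ : ∀ n (h : homSpace K m i i), (h : Qm K m) ∈ grade K m n → n ≠ 2 → (φ h).2 = 0) :
    ∃ ψ : B2space K m i i ≃ₗ[K] (Bspace K m i × Bspace K m i),
      (∀ (q : Qm K m) z, ψ (lB2 K m i i q z) =
        LinearMap.prodMap (lB K m i q) (lB K m i q) (ψ z)) ∧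
      (∀ (q : Qm K m) z, ψ (rB2 K m i i q z) =
        LinearMap.prodMap (rB K m i q) (rB K m i q) (ψ z)) ∧
      (∀ (a b c : ℕ) (p : leftIdeal K m i) (h : homSpace K m i i)
          (x : rightIdeal K m i),
        (p : Qm K m) ∈ grade K m a → (h : Qm K m) ∈ grade K m b →
        (x : Qm K m) ∈ grade K m c →
          (ψ (p ⊗ₜ[K] (h ⊗ₜ[K] x))).1 ∈ Bgrade K m i ((a : ℤ) + b + c) ∧
          (ψ (p ⊗ₜ[K] (h ⊗ₜ[K] x))).2 ∈ Bgrade K m i ((a : ℤ) + b + c - 2)) := by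
  refine ⟨splitMiddle φ, fun q z => splitMiddle_rTensor φ (lmulLeft K m i q) z,
    fun q z => splitMiddle_lTensor φ (rmulRight K m i q) z, ?_⟩
  intro a b c p h x hp hh hx
  have hpx := tmul_mem_Bgrade hp hx
  rw [splitMiddle_tmul]
  constructor
  · rcases eq_or_ne b 0 with rfl | hb
    · simpa using Submodule.smul_mem _ _ hpx
    · rw [hφ₁ b h hh hb, zero_smul]
      exact Submodule.zero_mem _
  · rcases eq_or_ne b 2 with rfl | hb
    · exact Submodule.smul_mem _ _ (by convert hpx using 2; push_cast; ring)
    · rw [hφ₂ b h hh hb, zero_smul]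
      exact Submodule.zero_mem _

lemma exists_B3space_equiv {i j : Fin (m + 1)} (φ : homSpace K m i j ≃ₗ[K] K)
    (φ' : homSpace K m j i ≃ₗ[K] K)
    (hφ : ∀ n (h : homSpace K m i j), (h : Qm K m) ∈ grade K m n → n ≠ 1 → φ h = 0)
    (hφ' : ∀ n (h : homSpace K m j i), (h : Qm K m) ∈ grade K m n → n ≠ 1 → φ' h = 0) :
    ∃ ψ : B3space K m i j ≃ₗ[K] Bspace K m i,
      (∀ (q : Qm K m) z, ψ (lB3 K m i j q z) = lB K m i q (ψ z)) ∧
      (∀ (q : Qm K m) z, ψ (rB3 K m i j q z) = rB K m i q (ψ z)) ∧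
      (∀ (a b c d : ℕ) (p : leftIdeal K m i) (h : homSpace K m i j)
          (h' : homSpace K m j i) (x : rightIdeal K m i),
        (p : Qm K m) ∈ grade K m a → (h : Qm K m) ∈ grade K m b →
        (h' : Qm K m) ∈ grade K m c → (x : Qm K m) ∈ grade K m d →
          ψ (p ⊗ₜ[K] (h ⊗ₜ[K] (h' ⊗ₜ[K] x))) ∈
            Bgrade K m i ((a : ℤ) + b + c + d - 2)) := by
  refine ⟨contractMiddle₂ φ φ', fun q z => contractMiddle₂_rTensor φ φ' (lmulLeft K m i q) z,
    fun q z => contractMiddle₂_lTensor φ φ' (rmulRight K m i q) z, ?_⟩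
  intro a b c d p h h' x hp hh hh' hx
  rw [contractMiddle₂_tmul]
  rcases eq_or_ne b 1 with rfl | hb
  · rcases eq_or_ne c 1 with rfl | hc
    · exact Submodule.smul_mem _ _ (by convert tmul_mem_Bgrade hp hx using 2; push_cast; ring)
    · rw [hφ' c h' hh' hc, mul_zero, zero_smul]
      exact Submodule.zero_mem _
  · rw [hφ b h hh hb, zero_mul, zero_smul]
    exact Submodule.zero_mem _

lemma subsingleton_B2space {i' i : Fin (m + 1)} (h : 1 < ((i : ℤ) - (i' : ℤ)).natAbs) :
    Subsingleton (B2space K m i' i) :=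
  have : Subsingleton (homSpace K m i' i) := Submodule.subsingleton_iff_eq_bot.2 (homSpace_eq_bot h)
  inferInstance

end TemperleyLieb

end KS

open KS TensorProduct in
/-- **Categorified Temperley–Lieb relations for the projective functors.**
The functors `U_i = - ⊗_{Q_m} B_i` (with `B_i = P_i ⊗ ᵢP⟨-1⟩`) on graded
projective right `Q_m`-modules satisfy `U_i ∘ U_i ≅ U_i⟨-1⟩ ⊕ U_i⟨+1⟩`,
`U_i ∘ U_{i±1} ∘ U_i ≅ U_i` (when all indices lie in `{1, …, m}`), and
`U_i ∘ U_{i'} ≅ 0` for `|i - i'| > 1`.  Equivalently, on the level of the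
representing bimodules (using `B_i ⊗_{Q_m} B_j ≅ Q_me_i ⊗ e_iQ_me_j ⊗ e_jQ_m`):
there are `K`-linear isomorphisms, equivariant for the left and right
`Q_m`-actions and with the path-length degree shifts recorded below. -/
theorem Ui_temperley_lieb_relations (K : Type*) [Field K] (m : ℕ)
    (i : Fin (m + 1)) (hi0 : 0 < (i : ℕ)) :
    -- `U_i ∘ U_i ≅ U_i⟨-1⟩ ⊕ U_i⟨+1⟩`:
    (∃ ψ : B2space K m i i ≃ₗ[K] (Bspace K m i × Bspace K m i),
      (∀ (q : Qm K m) z, ψ (lB2 K m i i q z) =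
        LinearMap.prodMap (lB K m i q) (lB K m i q) (ψ z)) ∧
      (∀ (q : Qm K m) z, ψ (rB2 K m i i q z) =
        LinearMap.prodMap (rB K m i q) (rB K m i q) (ψ z)) ∧
      (∀ (a b c : ℕ) (p : leftIdeal K m i) (h : homSpace K m i i)
          (x : rightIdeal K m i),
        (p : Qm K m) ∈ grade K m a → (h : Qm K m) ∈ grade K m b →
        (x : Qm K m) ∈ grade K m c →
          (ψ (p ⊗ₜ[K] (h ⊗ₜ[K] x))).1 ∈ Bgrade K m i ((a : ℤ) + b + c) ∧
          (ψ (p ⊗ₜ[K] (h ⊗ₜ[K] x))).2 ∈ Bgrade K m i ((a : ℤ) + b + c - 2))) ∧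
    -- `U_i ∘ U_{i±1} ∘ U_i ≅ U_i`:
    (∀ j : Fin (m + 1), 0 < (j : ℕ) → ((i : ℤ) - (j : ℤ)).natAbs = 1 →
      ∃ ψ : B3space K m i j ≃ₗ[K] Bspace K m i,
      (∀ (q : Qm K m) z, ψ (lB3 K m i j q z) = lB K m i q (ψ z)) ∧
      (∀ (q : Qm K m) z, ψ (rB3 K m i j q z) = rB K m i q (ψ z)) ∧
      (∀ (a b c d : ℕ) (p : leftIdeal K m i) (h : homSpace K m i j)
          (h' : homSpace K m j i) (x : rightIdeal K m i),
        (p : Qm K m) ∈ grade K m a → (h : Qm K m) ∈ grade K m b →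
        (h' : Qm K m) ∈ grade K m c → (x : Qm K m) ∈ grade K m d →
          ψ (p ⊗ₜ[K] (h ⊗ₜ[K] (h' ⊗ₜ[K] x))) ∈
            Bgrade K m i ((a : ℤ) + b + c + d - 2))) ∧
    -- `U_i ∘ U_{i'} ≅ 0` for `|i - i'| > 1`:
    (∀ i' : Fin (m + 1), 1 < ((i : ℤ) - (i' : ℤ)).natAbs →
      Subsingleton (B2space K m i' i)) := by
  obtain ⟨k, rfl⟩ : ∃ k : Fin m, i = k.succ :=
    ⟨⟨(i : ℕ) - 1, by omega⟩, Fin.ext (by simp; omega)⟩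
  refine ⟨exists_B2space_equiv (homSpaceSuccEquiv k)
    (fun _ _ => homSpaceSuccEquiv_fst_eq_zero) (fun _ _ => homSpaceSuccEquiv_snd_eq_zero),
    fun j _ hj => ?_, fun i' => subsingleton_B2space⟩
  obtain hj | hj : (j : ℕ) = k ∨ (j : ℕ) = k + 2 := by simp at hj; omega
  · obtain rfl : j = k.castSucc := Fin.ext hj
    exact exists_B3space_equiv (i := k.succ) (j := k.castSucc)
      (homSpaceEquivOfLeSpan (.u k) (homSpace_succ_castSucc_le k))
      (homSpaceEquivOfLeSpan (.d k) (homSpace_castSucc_succ_le k))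
      (fun _ _ => homSpaceEquivOfLeSpan_eq_zero (.u k) _)
      (fun _ _ => homSpaceEquivOfLeSpan_eq_zero (.d k) _)
  · obtain ⟨k', hk, rfl⟩ : ∃ k' : Fin m, k.succ = k'.castSucc ∧ j = k'.succ :=
      ⟨⟨k + 1, by omega⟩, Fin.ext (by simp), Fin.ext (by simp; omega)⟩
    rw [hk]
    exact exists_B3space_equiv (i := k'.castSucc) (j := k'.succ)
      (homSpaceEquivOfLeSpan (.d k') (homSpace_castSucc_succ_le k'))
      (homSpaceEquivOfLeSpan (.u k') (homSpace_succ_castSucc_le k'))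
      (fun _ _ => homSpaceEquivOfLeSpan_eq_zero (.d k') _)
      (fun _ _ => homSpaceEquivOfLeSpan_eq_zero (.u k') _)
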